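/- Let T be a phylogenetic X-tree with tree metric δ_T, let a, b be leaves of T, and let e be an edge of T. Writing Z_{δ_T}(a,b) = ∑_{e' ∈ E(T)} β(e') l(e') as a linear function of the edge lengths (with Z scaled by C(n-1,2)), the coefficient of l(e) is β(e) = -(N⁺_e(a) - 1)(N⁻_e(a) - 1) if e lies on the path from a to b, and β(e) = N⁻_e(a)(N⁻_e(a) - 1) otherwise, where N⁺_e(a) and N⁻_e(a) are the numbers of leaves on the same side and the far side of e from a, respectively. -/

import Mathlib

open Finset
open scoped Classical

/-- `w_δ(ij:kl) = (1/2)(δ(i,k)+δ(i,l)+δ(j,k)+δ(j,l)) - δ(i,j) - δ(k,l)`. -/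
noncomputable def njw {X : Type*} (δ : X → X → ℝ) (i j k l : X) : ℝ :=
  (δ i k + δ i l + δ j k + δ j l) / 2 - δ i j - δ k l

/-- Edge `e` (with split side `σ e`) separates the pair `p,q` from the pair `r,s`. -/
def sepE {X E : Type*} (σ : E → Finset X) (e : E) (p q r s : X) : Prop :=
  (p ∈ σ e ∧ q ∈ σ e ∧ r ∉ σ e ∧ s ∉ σ e) ∨
  (p ∉ σ e ∧ q ∉ σ e ∧ r ∈ σ e ∧ s ∈ σ e)

/-- `(ij:kl)` is a quartet of the tree encoded by the split system `σ`:
some internal edge separates `{i,j}` from `{k,l}`. -/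
def isQuartet {X E : Type*} (σ : E → Finset X) (i j k l : X) : Prop :=
  ∃ e, sepE σ e i j k l

/-- Pairwise compatibility of the splits: the condition under which a split system
is exactly the split system of a (phylogenetic) tree. -/
def splitsCompatible {X E : Type*} [Fintype X] (σ : E → Finset X) : Prop :=
  ∀ e f, σ e ⊆ σ f ∨ σ f ⊆ σ e ∨ (∀ a, a ∈ σ e → a ∉ σ f) ∨ (∀ a, a ∈ σ e ∨ a ∈ σ f)

/-- A dissimilarity map `δ` is quartet consistent with the tree encoded by `σ`. -/
def quartetConsistent {X E : Type*} (σ : E → Finset X) (δ : X → X → ℝ) : Prop :=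
  ∀ i j k l : X, i ≠ j → i ≠ k → i ≠ l → j ≠ k → j ≠ l → k ≠ l →
    isQuartet σ i j k l →
      njw δ i j k l > max (njw δ i k j l) (njw δ i l j k)

/-- The scaled Z-criterion `Z_δ(i,j) = ∑_{{k,l} ⊆ X\{i,j}} w_δ(ij:kl)`
(sum over unordered pairs, written as half the sum over ordered pairs). -/
noncomputable def njZ {X : Type*} [Fintype X] [DecidableEq X]
    (δ : X → X → ℝ) (i j : X) : ℝ :=
  (1 / 2) * ∑ k ∈ (Finset.univ.erase i).erase j,
    ∑ l ∈ ((Finset.univ.erase i).erase j).erase k, njw δ i j k l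

/-- `(x,y)` is a cherry of the tree encoded by `σ`: some edge induces the split
`{x,y} | X \ {x,y}`. -/
def isCherry {X E : Type*} [Fintype X] [DecidableEq X]
    (σ : E → Finset X) (x y : X) : Prop :=
  x ≠ y ∧ ∃ e, σ e = {x, y} ∨ σ e = ({x, y} : Finset X)ᶜ

/-! Both `w_δ` and `Z_δ` are linear in `δ`, and `δ_T` is the `l`-weighted sum of the split
metrics of the edges, so `β(e)` is the Z-criterion of the split metric of `e`. Cutting at `F`, the
side of `e` away from `a`, that criterion only counts the leaves of `X ∖ {a, b}` on each side of
`F`, and whether `b ∈ F` decides which of the two formulas comes out. -/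

noncomputable def splitMetric {X : Type*} (F : Finset X) (x y : X) : ℝ :=
  if (x ∈ F ↔ y ∈ F) then 0 else 1

lemma njw_sum_mul {X ι : Type*} (s : Finset ι) (c : ι → ℝ) (δ : ι → X → X → ℝ)
    (i j k l : X) :
    njw (fun x y => ∑ e ∈ s, c e * δ e x y) i j k l = ∑ e ∈ s, c e * njw (δ e) i j k l := by
  simp only [njw, ← Finset.sum_add_distrib, Finset.sum_div, ← Finset.sum_sub_distrib]
  exact Finset.sum_congr rfl fun e _ => by ring

lemma njZ_sum_mul {X ι : Type*} [Fintype X] [DecidableEq X] (s : Finset ι) (c : ι → ℝ)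
    (δ : ι → X → X → ℝ) (i j : X) :
    njZ (fun x y => ∑ e ∈ s, c e * δ e x y) i j = ∑ e ∈ s, c e * njZ (δ e) i j := by
  simp only [njZ, njw_sum_mul, Finset.mul_sum]
  rw [Finset.sum_comm]
  refine Finset.sum_congr rfl fun k _ => ?_
  rw [Finset.sum_comm]
  refine Finset.sum_congr rfl fun l _ => Finset.sum_congr rfl fun e _ => ?_
  ring

lemma sum_sum_erase {X M : Type*} [DecidableEq X] [AddCommGroup M] (S : Finset X)
    (f : X → X → M) :
    ∑ k ∈ S, ∑ l ∈ S.erase k, f k l = ∑ k ∈ S, ∑ l ∈ S, f k l - ∑ k ∈ S, f k k := by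
  rw [← Finset.sum_sub_distrib]
  exact Finset.sum_congr rfl fun k hk => Finset.sum_erase_eq_sub hk

lemma two_mul_njZ {X : Type*} [Fintype X] [DecidableEq X] (δ : X → X → ℝ)
    (hδ : ∀ x, δ x x = 0) (i j : X) :
    let S := (Finset.univ.erase i).erase j
    2 * njZ δ i j = ((#S : ℝ) - 1) * ∑ k ∈ S, (δ i k + δ j k) - #S * (#S - 1) * δ i j
      - ∑ k ∈ S, ∑ l ∈ S, δ k l := by
  intro S
  rw [njZ, ← mul_assoc, sum_sum_erase]
  simp only [njw, hδ, Finset.sum_sub_distrib, Finset.sum_add_distrib, ← Finset.sum_div,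
    Finset.sum_const, nsmul_eq_mul, ← Finset.mul_sum]
  ring

lemma sum_splitMetric {X : Type*} [DecidableEq X] (F S : Finset X) (x : X) :
    ∑ k ∈ S, splitMetric F x k = if x ∈ F then (#(S \ F) : ℝ) else #(S ∩ F) := by
  by_cases hx : x ∈ F
  · simp [splitMetric, hx, Finset.sum_ite, Finset.sdiff_eq_filter]
  · simp [splitMetric, hx]

lemma sum_sum_splitMetric {X : Type*} [DecidableEq X] (F S : Finset X) :
    ∑ k ∈ S, ∑ l ∈ S, splitMetric F k l = 2 * #(S ∩ F) * #(S \ F) := by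
  simp only [sum_splitMetric]
  rw [Finset.sum_ite]
  simp only [Finset.filter_mem_eq_inter, ← Finset.sdiff_eq_filter, Finset.sum_const, nsmul_eq_mul]
  ring

lemma njZ_splitMetric {X : Type*} [Fintype X] [DecidableEq X] (F : Finset X) {a : X}
    (ha : a ∉ F) (b : X) :
    njZ (splitMetric F) a b =
      if b ∈ F then -(((#Fᶜ : ℝ) - 1) * (#F - 1)) else #F * (#F - 1) := by
  have h2 := two_mul_njZ (splitMetric F) (by simp [splitMetric]) a b
  dsimp only at h2
  set S := (Finset.univ.erase a).erase b
  have hS : #S = #(S ∩ F) + #(S \ F) := (Finset.card_inter_add_card_sdiff S F).symm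
  have hSF : S ∩ F = (F.erase a).erase b := by
    rw [Finset.erase_inter, Finset.erase_inter, Finset.univ_inter]
  rw [Finset.sum_add_distrib, sum_splitMetric, sum_splitMetric, sum_sum_splitMetric, hS] at h2
  simp only [splitMetric, ha, false_iff, ite_not] at h2
  push_cast at h2
  split_ifs with hb
  · have hSF' : S \ F = Fᶜ.erase a := by
      rw [Finset.erase_sdiff_comm, Finset.erase_sdiff_comm, ← Finset.compl_eq_univ_sdiff,
        Finset.erase_eq_of_notMem]
      simp [hb]
    have hF : (#(S ∩ F) : ℝ) + 1 = #F := by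
      rw [hSF, Finset.erase_eq_of_notMem ha]; exact_mod_cast Finset.card_erase_add_one hb
    have hFc : (#(S \ F) : ℝ) + 1 = #Fᶜ := by
      rw [hSF']; exact_mod_cast Finset.card_erase_add_one (Finset.mem_compl.2 ha)
    simp only [hb, if_true] at h2
    rw [← hF, ← hFc]
    linarith
  · have hF : S ∩ F = F := by
      rw [hSF, Finset.erase_eq_of_notMem ha, Finset.erase_eq_of_notMem hb]
    simp only [hb, if_false, hF] at h2
    linarith

lemma splitMetric_filter_ne_mem {X : Type*} [Fintype X] [DecidableEq X] (P : Finset X) (a : X) :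
    splitMetric (Finset.univ.filter fun v => (v ∈ P) ≠ (a ∈ P)) = splitMetric P := by
  funext x y
  by_cases hx : x ∈ P <;> by_cases hy : y ∈ P <;> by_cases ha : a ∈ P <;>
    simp [splitMetric, hx, hy, ha]

theorem statement_12_general {X E : Type*} [Fintype X] [DecidableEq X] [Fintype E]
    (σ : E → Finset X) (le : E → ℝ)
    (δT : X → X → ℝ)
    (hδT : ∀ x y, δT x y = ∑ e, if (x ∈ σ e) ≠ (y ∈ σ e) then le e else 0)
    (a b : X)
    (Np Nm : E → ℕ)
    (hNp : ∀ e, Np e = (Finset.univ.filter (fun v : X => (v ∈ σ e) = (a ∈ σ e))).card)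
    (hNm : ∀ e, Nm e = (Finset.univ.filter (fun v : X => (v ∈ σ e) ≠ (a ∈ σ e))).card) :
    njZ δT a b =
      ∑ e, (if (a ∈ σ e) ≠ (b ∈ σ e)
              then -(((Np e : ℝ) - 1) * ((Nm e : ℝ) - 1))
              else (Nm e : ℝ) * ((Nm e : ℝ) - 1)) * le e := by
  set far : E → Finset X := fun e => Finset.univ.filter fun v => (v ∈ σ e) ≠ (a ∈ σ e)
  have hδT_split : δT = fun x y => ∑ e, le e * splitMetric (far e) x y := by
    funext x y
    simp only [hδT, far, splitMetric_filter_ne_mem]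
    simp only [splitMetric, ne_eq, eq_iff_iff]
    exact Finset.sum_congr rfl fun e _ => by split_ifs <;> simp
  rw [hδT_split, njZ_sum_mul]
  refine Finset.sum_congr rfl fun e _ => ?_
  have ha : a ∉ far e := by simp [far]
  rw [njZ_splitMetric _ ha, hNp, hNm, mul_comm, Finset.compl_filter]
  simp [far, eq_comm]

/-- writing the scaled Z-criterion of a tree metric as a linear function
of the edge lengths, `Z_{δT}(a,b) = ∑_{e} β(e) l(e)`, the coefficient of `l(e)` is
`-(N⁺_e(a)-1)(N⁻_e(a)-1)` if `e` is on the path from `a` to `b` (i.e. `e` separates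
`a` from `b`), and `N⁻_e(a)(N⁻_e(a)-1)` otherwise, where `N⁺_e(a)` (resp. `N⁻_e(a)`)
is the number of leaves on the same (resp. far) side of `e` as `a`. -/
theorem statement_12 {X E : Type*} [Fintype X] [DecidableEq X] [Fintype E]
    (σ : E → Finset X) (le : E → ℝ)
    (hle : ∀ e, 0 < le e)
    (hcompat : splitsCompatible σ)
    (hnontriv : ∀ e, (σ e).Nonempty ∧ σ e ≠ Finset.univ)
    (δT : X → X → ℝ)
    (hδT : ∀ x y, δT x y = ∑ e, if (x ∈ σ e) ≠ (y ∈ σ e) then le e else 0)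
    (a b : X) (hab : a ≠ b)
    (Np Nm : E → ℕ)
    (hNp : ∀ e, Np e = (Finset.univ.filter (fun v : X => (v ∈ σ e) = (a ∈ σ e))).card)
    (hNm : ∀ e, Nm e = (Finset.univ.filter (fun v : X => (v ∈ σ e) ≠ (a ∈ σ e))).card) :
    njZ δT a b =
      ∑ e, (if (a ∈ σ e) ≠ (b ∈ σ e)
              then -(((Np e : ℝ) - 1) * ((Nm e : ℝ) - 1))
              else (Nm e : ℝ) * ((Nm e : ℝ) - 1)) * le e :=
  statement_12_general σ le δT hδT a b Np Nm hNp hNm
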